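/- arXiv:2203.10838 — 3 statements merged into one kernel-verified Lean document; each statement's English description precedes it below -/
import Mathlib

section
/- Let A be a real m×n matrix with nonzero rows a_1^T,…,a_m^T, let w_1,…,w_m be real weights, and let p_1,…,p_m be a probability distribution on {1,…,m}. Let τ be a tuple of η indices drawn i.i.d. from {1,…,m} with probabilities p_i, and define the random matrix M = (1/η) Σ_{i∈τ} w_i e_i e_i^T / ‖a_i‖₂². Then E[(A^T M)^T (A^T M)] = (1/η) P W² D^{-2} + (1 − 1/η) P W D^{-2} A A^T P W D^{-2}, where P = Diag(p_1,…,p_m), W = Diag(w_1,…,w_m) and D = Diag(‖a_1‖₂,…,‖a_m‖₂). -/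
open Matrix Finset

noncomputable section

/-- Euclidean dot product of two vectors. -/
def dot {n : ℕ} (x y : Fin n → ℝ) : ℝ := ∑ j, x j * y j

/-- Squared Euclidean norm of a vector. -/
def norm2Sq {n : ℕ} (x : Fin n → ℝ) : ℝ := ∑ j, x j ^ 2

/-- ℓ¹ norm of a vector. -/
def l1Norm {n : ℕ} (x : Fin n → ℝ) : ℝ := ∑ j, |x j|

/-- Squared Euclidean norm of the i-th row of a matrix. -/
def rowNormSq {m n : ℕ} (A : Matrix (Fin m) (Fin n) ℝ) (i : Fin m) : ℝ := ∑ j, A i j ^ 2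

/-- Squared Frobenius norm of a matrix. -/
def frobSq {m n : ℕ} (A : Matrix (Fin m) (Fin n) ℝ) : ℝ := ∑ i, ∑ j, A i j ^ 2

/-- Largest singular value (spectral norm) of a matrix:  sup over `x ≠ 0` of `‖Ax‖₂/‖x‖₂`. -/
def sigmaMax {m n : ℕ} (A : Matrix (Fin m) (Fin n) ℝ) : ℝ :=
  sSup {t : ℝ | ∃ x : Fin n → ℝ, x ≠ 0 ∧
    t = Real.sqrt (norm2Sq (A.mulVec x)) / Real.sqrt (norm2Sq x)}

/-- `σ̃_min(A)`: the minimum over nonzero column-submatrices `A_J` of the smallest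
singular value `σ_min(A_J) = min_{x ≠ 0, supp x ⊆ J} ‖Ax‖₂/‖x‖₂`. -/
def sigmaTildeMin {m n : ℕ} (A : Matrix (Fin m) (Fin n) ℝ) : ℝ :=
  sInf {t : ℝ | ∃ J : Finset (Fin n), (∃ i j, j ∈ J ∧ A i j ≠ 0) ∧
    ∃ x : Fin n → ℝ, x ≠ 0 ∧ (∀ j ∉ J, x j = 0) ∧
      t = Real.sqrt (norm2Sq (A.mulVec x)) / Real.sqrt (norm2Sq x)}

/-- `|x|_min`: the smallest absolute value of the nonzero entries of `x`. -/
def minAbs {n : ℕ} (x : Fin n → ℝ) : ℝ := sInf {t : ℝ | ∃ j, x j ≠ 0 ∧ t = |x j|}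

/-- Componentwise soft shrinkage operator `S_λ(x) = max{|x| - λ, 0}·sign(x)`. -/
def softShrink {n : ℕ} (lam : ℝ) (x : Fin n → ℝ) : Fin n → ℝ :=
  fun j => Real.sign (x j) * max (|x j| - lam) 0

/-- The objective `f(x) = λ‖x‖₁ + ½‖x‖₂²`. -/
def fObj {n : ℕ} (lam : ℝ) (x : Fin n → ℝ) : ℝ := lam * l1Norm x + norm2Sq x / 2

/-- `g` is a subgradient of `f` at `x`. -/
def IsSubgrad {n : ℕ} (f : (Fin n → ℝ) → ℝ) (x g : Fin n → ℝ) : Prop :=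
  ∀ y, f x + dot g (y - x) ≤ f y

/-- Bregman distance `D_f^{x*}(x, y) = f(y) - f(x) - ⟨x*, y - x⟩`. -/
def breg {n : ℕ} (f : (Fin n → ℝ) → ℝ) (xstar x y : Fin n → ℝ) : ℝ :=
  f y - f x - dot xstar (y - x)

/-- The random weighted sampling matrix `M = (1/η) Σ_{i∈τ} w_i e_i e_iᵀ / ‖a_i‖₂²`
associated with a tuple `τ` of `η` sampled row indices. -/
def Mmat {m n : ℕ} (A : Matrix (Fin m) (Fin n) ℝ) (w : Fin m → ℝ) (η : ℕ)
    (τ : Fin η → Fin m) : Matrix (Fin m) (Fin m) ℝ :=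
  (η : ℝ)⁻¹ • ∑ t, (w (τ t) / rowNormSq A (τ t)) • Matrix.single (τ t) (τ t) (1 : ℝ)

/-!
Every sampling matrix is diagonal, `M = Diag(c_i N_i)` with `c_i = w_i / (η ‖a_i‖²)` and `N_i` the
number of draws equal to `i`, so `(Aᵀ M)ᵀ (Aᵀ M) = M (A Aᵀ) M` has entries `c_i c_j (A Aᵀ)_{ij} N_i N_j`.
Writing `N_i N_j` as a double sum of indicators over pairs of draws, a pair `(s, s)` contributes
`δ_{ij} p_i` and a pair `s ≠ t` contributes `p_i p_j` by independence, whence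
`E[N_i N_j] = η δ_{ij} p_i + η (η - 1) p_i p_j`; the diagonal term uses `(A Aᵀ)_{ii} = ‖a_i‖²`.
-/

theorem sum_smul_single_comp_eq_diagonal {R ι κ : Type*} [Semiring R] [Fintype κ]
    [DecidableEq ι] (τ : κ → ι) (c : ι → R) :
    ∑ t, c (τ t) • single (τ t) (τ t) (1 : R) = diagonal fun i => #{t | τ t = i} * c i := by
  ext i j
  simp only [Matrix.sum_apply, smul_single, smul_eq_mul, mul_one, single_apply, diagonal_apply]
  split_ifs with hij
  · subst hij
    rw [natCast_card_filter, sum_mul]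
    refine sum_congr rfl fun t _ => ?_
    by_cases h : τ t = i <;> simp [h]
  · exact sum_eq_zero fun t _ => if_neg fun h => hij (h.1.symm.trans h.2)

section ProductWeights

variable {ι κ : Type*} [Fintype ι] [Fintype κ] [DecidableEq κ] {p : ι → ℝ}

theorem sum_prod_mul_prod_apply (p : ι → ℝ) (F : κ → ι → ℝ) :
    ∑ τ : κ → ι, (∏ u, p (τ u)) * ∏ u, F u (τ u) = ∏ u, ∑ i, p i * F u i := by
  simp_rw [← prod_mul_distrib]
  exact (Fintype.prod_sum fun u i => p i * F u i).symm

theorem sum_prod_mul_apply (hp : ∑ i, p i = 1) (s : κ) (f : ι → ℝ) :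
    ∑ τ : κ → ι, (∏ u, p (τ u)) * f (τ s) = ∑ i, p i * f i := by
  simpa [mul_ite, prod_ite_eq', hp] using
    sum_prod_mul_prod_apply p fun u i => if u = s then f i else 1

theorem sum_prod_mul_apply_mul_apply (hp : ∑ i, p i = 1) {s t : κ} (hst : s ≠ t)
    (f g : ι → ℝ) :
    ∑ τ : κ → ι, (∏ u, p (τ u)) * (f (τ s) * g (τ t)) = (∑ i, p i * f i) * ∑ i, p i * g i := by
  let F : κ → ι → ℝ := fun u i => if u = s then f i else if u = t then g i else 1
  have hF : ∀ u i, u ≠ s ∧ u ≠ t → F u i = 1 := fun u i hu => by simp [F, hu.1, hu.2]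
  have hprod : ∀ τ : κ → ι, ∏ u, F u (τ u) = f (τ s) * g (τ t) := fun τ => by
    rw [Fintype.prod_eq_mul s t hst fun u hu => hF u _ hu]
    simp [F, hst.symm]
  have key := sum_prod_mul_prod_apply p F
  rw [Fintype.prod_eq_mul s t hst fun u hu => by simp [hF u _ hu, hp]] at key
  simpa [hprod, F, hst.symm] using key

theorem sum_sum_ite_eq_const (D E : ℝ) :
    ∑ s : κ, ∑ t : κ, (if s = t then D else E)
      = Fintype.card κ * D + Fintype.card κ * (Fintype.card κ - 1) * E := by
  have split : ∀ s t : κ, (if s = t then D else E) = E + if s = t then D - E else 0 := by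
    intro s t; split_ifs <;> ring
  simp_rw [split, sum_add_distrib, sum_ite_eq, mem_univ, if_true, sum_const, card_univ,
    nsmul_eq_mul]
  ring

variable [DecidableEq ι]

theorem sum_prod_mul_card_mul_card (hp : ∑ i, p i = 1) (i j : ι) :
    ∑ τ : κ → ι, (∏ u, p (τ u)) * ((#{u | τ u = i} : ℝ) * #{u | τ u = j})
      = Fintype.card κ * (if i = j then p i else 0)
        + Fintype.card κ * (Fintype.card κ - 1) * (p i * p j) := by
  have pair : ∀ s t : κ, ∑ τ : κ → ι, (∏ u, p (τ u)) *
      ((if τ s = i then (1 : ℝ) else 0) * if τ t = j then 1 else 0) =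
      if s = t then (if i = j then p i else 0) else p i * p j := by
    intro s t
    rcases eq_or_ne s t with rfl | hst
    · rw [sum_prod_mul_apply hp s fun k => (if k = i then (1 : ℝ) else 0) * if k = j then 1 else 0,
        if_pos rfl]
      by_cases hij : i = j <;> simp [mul_ite, hij, Ne.symm]
    · rw [sum_prod_mul_apply_mul_apply hp hst (fun k => if k = i then 1 else 0)
        fun k => if k = j then 1 else 0]
      simp [hst]
  simp_rw [natCast_card_filter, sum_mul_sum, mul_sum]
  rw [sum_comm]
  simp_rw [sum_comm (s := (univ : Finset (κ → ι))), pair]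
  exact sum_sum_ite_eq_const _ _


theorem sum_prod_smul_diagonal_mul_mul_diagonal (hp : ∑ i, p i = 1) (c : ι → ℝ)
    (G : Matrix ι ι ℝ) :
    ∑ τ : κ → ι, (∏ u, p (τ u)) • (diagonal (fun i => c i * #{u | τ u = i}) * G *
        diagonal (fun i => c i * #{u | τ u = i}))
      = (Fintype.card κ : ℝ) • diagonal (fun i => p i * c i ^ 2 * G i i)
        + (Fintype.card κ * (Fintype.card κ - 1) : ℝ) •
          (diagonal (fun i => p i * c i) * G * diagonal (fun i => p i * c i)) := by
  ext i j
  have entry : ∀ τ : κ → ι,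
      (∏ u, p (τ u)) * (c i * #{u | τ u = i} * G i j * (c j * #{u | τ u = j})) =
        c i * c j * G i j * ((∏ u, p (τ u)) * ((#{u | τ u = i} : ℝ) * #{u | τ u = j})) :=
    fun τ => by ring
  simp only [Matrix.sum_apply, Matrix.smul_apply, Matrix.add_apply, mul_diagonal, diagonal_mul,
    diagonal_apply, smul_eq_mul, entry, ← mul_sum, sum_prod_mul_card_mul_card hp]
  split_ifs with hij
  · subst hij; ring
  · ring

end ProductWeights

theorem rowNormSq_eq_dotProduct {m n : ℕ} (A : Matrix (Fin m) (Fin n) ℝ) (i : Fin m) :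
    rowNormSq A i = A i ⬝ᵥ A i := by
  simp [rowNormSq, dotProduct, sq]

theorem rowNormSq_eq_mul_transpose_apply {m n : ℕ} (A : Matrix (Fin m) (Fin n) ℝ) (i : Fin m) :
    rowNormSq A i = (A * Aᵀ) i i := by
  rw [rowNormSq_eq_dotProduct, mul_apply']
  rfl

theorem rowNormSq_ne_zero {m n : ℕ} {A : Matrix (Fin m) (Fin n) ℝ} {i : Fin m} (h : A i ≠ 0) :
    rowNormSq A i ≠ 0 := by
  rwa [rowNormSq_eq_dotProduct, Ne, dotProduct_self_eq_zero]

theorem Mmat_eq_diagonal {m n η : ℕ} (A : Matrix (Fin m) (Fin n) ℝ) (w : Fin m → ℝ)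
    (τ : Fin η → Fin m) :
    Mmat A w η τ = diagonal fun i => (η : ℝ)⁻¹ * (w i / rowNormSq A i) * #{t | τ t = i} := by
  rw [Mmat, sum_smul_single_comp_eq_diagonal τ fun i => w i / rowNormSq A i, ← diagonal_smul]
  congr 1 with i
  simp only [Pi.smul_apply, smul_eq_mul]
  ring

theorem second_moment_of_sampling_matrix_general {m n η : ℕ} (hη : 0 < η)
    (A : Matrix (Fin m) (Fin n) ℝ) (hA : ∀ i, A i ≠ 0)
    (w p : Fin m → ℝ) (hp1 : ∑ i, p i = 1) :
    ∑ τ : Fin η → Fin m, (∏ t, p (τ t)) • ((Aᵀ * Mmat A w η τ)ᵀ * (Aᵀ * Mmat A w η τ))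
      = (η : ℝ)⁻¹ • Matrix.diagonal (fun i => p i * w i ^ 2 / rowNormSq A i)
        + (1 - (η : ℝ)⁻¹) •
          (Matrix.diagonal (fun i => p i * w i / rowNormSq A i) * A * Aᵀ *
            Matrix.diagonal (fun i => p i * w i / rowNormSq A i)) := by
  have hη₀ : (η : ℝ) ≠ 0 := Nat.cast_ne_zero.mpr hη.ne'
  have hr : ∀ i, rowNormSq A i ≠ 0 := fun i => rowNormSq_ne_zero (hA i)
  simp_rw [Mmat_eq_diagonal, transpose_mul, transpose_transpose, diagonal_transpose,
    ← Matrix.mul_assoc, Matrix.mul_assoc _ A Aᵀ]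
  rw [sum_prod_smul_diagonal_mul_mul_diagonal hp1, Fintype.card_fin]
  have hscale : (diagonal fun i => p i * ((η : ℝ)⁻¹ * (w i / rowNormSq A i)))
      = (η : ℝ)⁻¹ • diagonal fun i => p i * w i / rowNormSq A i := by
    rw [← diagonal_smul]
    congr 1 with i
    simp only [Pi.smul_apply, smul_eq_mul]
    ring
  congr 1
  · rw [← diagonal_smul, ← diagonal_smul]
    congr 1 with i
    simp only [Pi.smul_apply, smul_eq_mul, ← rowNormSq_eq_mul_transpose_apply]
    field_simp
  · simp only [hscale, Matrix.smul_mul, Matrix.mul_smul, smul_smul, ← Matrix.mul_assoc]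
    congr 1
    field_simp

/-- If the `η` indices in `τ` are sampled i.i.d. with probabilities `p_i`,
then `E[(Aᵀ M)ᵀ (Aᵀ M)] = (1/η) P W² D⁻² + (1 − 1/η) P W D⁻² A Aᵀ P W D⁻²`. -/
theorem second_moment_of_sampling_matrix {m n η : ℕ} (hη : 0 < η)
    (A : Matrix (Fin m) (Fin n) ℝ) (hA : ∀ i, A i ≠ 0)
    (w p : Fin m → ℝ) (hp0 : ∀ i, 0 ≤ p i) (hp1 : ∑ i, p i = 1) :
    ∑ τ : Fin η → Fin m, (∏ t, p (τ t)) • ((Aᵀ * Mmat A w η τ)ᵀ * (Aᵀ * Mmat A w η τ))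
      = (η : ℝ)⁻¹ • Matrix.diagonal (fun i => p i * w i ^ 2 / rowNormSq A i)
        + (1 - (η : ℝ)⁻¹) •
          (Matrix.diagonal (fun i => p i * w i / rowNormSq A i) * A * Aᵀ *
            Matrix.diagonal (fun i => p i * w i / rowNormSq A i)) :=
  second_moment_of_sampling_matrix_general hη A hA w p hp1
end
end

section
/- Let f : ℝⁿ → ℝ be convex (finite everywhere) and let Φ : ℝⁿ → ℝ ∪ {+∞} be convex with nonempty domain. Let X ⊆ dom(Φ) be nonempty and convex, let x_k ∈ ℝⁿ and x_k* ∈ ∂f(x_k), and suppose x_{k+1} ∈ argmin_{x ∈ X} { Φ(x) + D_f^{x_k*}(x_k, x) }. Then there exists a subgradient x_{k+1}* ∈ ∂f(x_{k+1}) such that for every y ∈ X: Φ(y) + D_f^{x_k*}(x_k, y) ≥ Φ(x_{k+1}) + D_f^{x_k*}(x_k, x_{k+1}) + D_f^{x_{k+1}*}(x_{k+1}, y). -/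
open Matrix Finset

noncomputable section

/-! Put `ψ := Φ - ⟪x_k*, ·⟫`. Minimality of `x_{k+1}` for `f + ψ` on `X` says that the convex
function `f` lies above the concave function `f x_{k+1} + ψ x_{k+1} - ψ` on `X`, touching it at
`x_{k+1}`. A convex function on `ℝⁿ` is continuous, so Hahn–Banach separates the open strict
epigraph of `f` from the hypograph of the concave function; the separating hyperplane is not
vertical because both sets meet the vertical line through `x_{k+1}`. Its slope `g` is a subgradient of `f` at `x_{k+1}` and `-g`
a subgradient of `ψ` relative to `X`, and the latter is the three-point inequality once the
Bregman distances are unfolded. -/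

section Separation

variable {E : Type*} [AddCommGroup E] [Module ℝ E] [TopologicalSpace E]
  [IsTopologicalAddGroup E] [ContinuousSMul ℝ E]

theorem exists_separation_strictEpigraph_hypograph {f h : E → ℝ} {X : Set E}
    (hf : ConvexOn ℝ Set.univ f) (hfc : Continuous f) (hh : ConcaveOn ℝ X h)
    (hhf : ∀ y ∈ X, h y ≤ f y) :
    ∃ (ℓ : StrongDual ℝ E) (c u : ℝ), (∀ y t, f y < t → ℓ y + t * c < u) ∧
      ∀ y ∈ X, ∀ t ≤ h y, u ≤ ℓ y + t * c := by
  have hopen : IsOpen {p : E × ℝ | p.1 ∈ Set.univ ∧ f p.1 < p.2} := by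
    simpa only [Set.mem_univ, true_and] using
      isOpen_lt (f := fun p : E × ℝ => f p.1) (by fun_prop) continuous_snd
  have hdisj : Disjoint {p : E × ℝ | p.1 ∈ Set.univ ∧ f p.1 < p.2}
      {p | p.1 ∈ X ∧ p.2 ≤ h p.1} :=
    Set.disjoint_left.2 fun p ⟨_, hlt⟩ ⟨hX, hle⟩ => (hlt.trans_le hle).not_ge (hhf _ hX)
  obtain ⟨L, u, hA, hB⟩ :=
    geometric_hahn_banach_open hf.convex_strict_epigraph hopen hh.convex_hypograph hdisj
  have hL : ∀ y t, L (y, t) = L (y, 0) + t * L (0, 1) := fun y t => by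
    rw [← smul_eq_mul, ← map_smul, ← map_add]
    simp
  refine ⟨L.comp (.inl ℝ E ℝ), L (0, 1), u, fun y t hyt => ?_, fun y hy t ht => ?_⟩
  · simpa [hL y t] using hA (y, t) ⟨trivial, hyt⟩
  · simpa [hL y t] using hB (y, t) ⟨hy, ht⟩

theorem exists_common_support_of_concaveOn_le {f h : E → ℝ} {X : Set E} {x₀ : E}
    (hf : ConvexOn ℝ Set.univ f) (hfc : Continuous f) (hh : ConcaveOn ℝ X h)
    (hhf : ∀ y ∈ X, h y ≤ f y) (hx₀ : x₀ ∈ X) (hfx₀ : h x₀ = f x₀) :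
    ∃ ℓ : StrongDual ℝ E, (∀ y, f x₀ + ℓ (y - x₀) ≤ f y) ∧
      ∀ y ∈ X, h y ≤ h x₀ + ℓ (y - x₀) := by
  obtain ⟨ℓ, c, u, hA, hB⟩ := exists_separation_strictEpigraph_hypograph hf hfc hh hhf
  have hc : c < 0 := by
    have h₁ := hA x₀ (f x₀ + 1) (lt_add_one _)
    have h₂ := hB x₀ hx₀ (f x₀) hfx₀.ge
    linarith
  obtain ⟨k, hk₀, hk⟩ : ∃ k : ℝ, 0 < k ∧ k * c = -1 :=
    ⟨(-c)⁻¹, inv_pos.2 (neg_pos.2 hc), by rw [inv_neg, neg_mul, inv_mul_cancel₀ hc.ne]⟩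
  have hA' : ∀ y, k * ℓ y - f y ≤ k * u := fun y => le_of_forall_pos_lt_add fun ε hε => by
    have := mul_lt_mul_of_pos_left (hA y (f y + ε) (lt_add_of_pos_right _ hε)) hk₀
    linear_combination this - (f y + ε) * hk
  have hB' : ∀ y ∈ X, k * u ≤ k * ℓ y - h y := fun y hy => by
    have := mul_le_mul_of_nonneg_left (hB y hy (h y) le_rfl) hk₀.le
    linear_combination this + h y * hk
  refine ⟨k • ℓ, fun y => ?_, fun y hy => ?_⟩
  · have := hA' y
    have := hB' x₀ hx₀
    simp only [FunLike.coe_smul, Pi.smul_apply, smul_eq_mul, map_sub]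
    linarith
  · have := hA' x₀
    have := hB' y hy
    simp only [FunLike.coe_smul, Pi.smul_apply, smul_eq_mul, map_sub]
    linarith

theorem exists_subgradient_of_isMinOn_add {f ψ : E → ℝ} {X : Set E} {x₀ : E}
    (hf : ConvexOn ℝ Set.univ f) (hfc : Continuous f) (hψ : ConvexOn ℝ X ψ) (hx₀ : x₀ ∈ X)
    (hmin : IsMinOn (f + ψ) X x₀) :
    ∃ ℓ : StrongDual ℝ E, (∀ y, f x₀ + ℓ (y - x₀) ≤ f y) ∧
      ∀ y ∈ X, ψ x₀ ≤ ψ y + ℓ (y - x₀) := by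
  obtain ⟨ℓ, hsub, hle⟩ := exists_common_support_of_concaveOn_le hf hfc
    ((concaveOn_const (f x₀ + ψ x₀) hψ.1).sub hψ)
    (fun y hy => by simpa [sub_le_iff_le_add] using hmin hy) hx₀ (by simp)
  refine ⟨ℓ, hsub, fun y hy => ?_⟩
  have := hle y hy
  simp only [Pi.sub_apply] at this
  linarith

end Separation

lemma dot_eq_dotProduct {n : ℕ} (x y : Fin n → ℝ) : dot x y = x ⬝ᵥ y := rfl

theorem bregman_minimization_lemma_general {n : ℕ} (f Φ : (Fin n → ℝ) → ℝ)
    (X : Set (Fin n → ℝ)) (hXconv : Convex ℝ X)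
    (hf : ConvexOn ℝ Set.univ f) (hΦ : ConvexOn ℝ X Φ)
    (xk xkstar : Fin n → ℝ)
    (xk1 : Fin n → ℝ) (hmem : xk1 ∈ X)
    (hmin : ∀ x ∈ X, Φ xk1 + breg f xkstar xk xk1 ≤ Φ x + breg f xkstar xk x) :
    ∃ g : Fin n → ℝ, IsSubgrad f xk1 g ∧ ∀ y ∈ X,
      Φ xk1 + breg f xkstar xk xk1 + breg f g xk1 y ≤ Φ y + breg f xkstar xk y := by
  let D := dotProductEquiv ℝ (Fin n)
  have hψ : ConvexOn ℝ X (Φ - ⇑(D xkstar)) := hΦ.sub ((D xkstar).concaveOn hXconv)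
  have hxk1 : IsMinOn (f + (Φ - ⇑(D xkstar))) X xk1 := isMinOn_iff.2 fun x hx => by
    have := hmin x hx
    simp only [breg, dot_eq_dotProduct, dotProduct_sub] at this
    simp only [Pi.add_apply, Pi.sub_apply, dotProductEquiv_apply_apply, D]
    linarith
  obtain ⟨ℓ, hsub, hle⟩ := exists_subgradient_of_isMinOn_add hf
    (continuousOn_univ.1 (hf.continuousOn isOpen_univ)) hψ hmem hxk1
  have hdot : ∀ v, dot (D.symm ℓ.toLinearMap) v = ℓ v := fun v => by
    rw [dot_eq_dotProduct, ← dotProductEquiv_apply_apply, LinearEquiv.apply_symm_apply]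
    rfl
  refine ⟨D.symm ℓ.toLinearMap, fun y => hdot _ ▸ hsub y, fun y hy => ?_⟩
  have := hle y hy
  simp only [Pi.sub_apply, dotProductEquiv_apply_apply, D] at this
  simp only [breg, hdot, dot_eq_dotProduct, dotProduct_sub]
  linarith

/-- (Bregman three-point minimization lemma.) If `x_{k+1}` minimizes
`Φ(x) + D_f^{x_k*}(x_k, x)` over the nonempty convex set `X` (contained in the domain of the
convex function `Φ`), then there is a subgradient `x_{k+1}* ∈ ∂f(x_{k+1})` with
`Φ(y) + D_f^{x_k*}(x_k, y) ≥ Φ(x_{k+1}) + D_f^{x_k*}(x_k, x_{k+1}) + D_f^{x_{k+1}*}(x_{k+1}, y)`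
for all `y ∈ X`. -/
theorem bregman_minimization_lemma {n : ℕ} (f Φ : (Fin n → ℝ) → ℝ)
    (X : Set (Fin n → ℝ)) (hXne : X.Nonempty) (hXconv : Convex ℝ X)
    (hf : ConvexOn ℝ Set.univ f) (hΦ : ConvexOn ℝ X Φ)
    (xk xkstar : Fin n → ℝ) (hxk : IsSubgrad f xk xkstar)
    (xk1 : Fin n → ℝ) (hmem : xk1 ∈ X)
    (hmin : ∀ x ∈ X, Φ xk1 + breg f xkstar xk xk1 ≤ Φ x + breg f xkstar xk x) :
    ∃ g : Fin n → ℝ, IsSubgrad f xk1 g ∧ ∀ y ∈ X,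
      Φ xk1 + breg f xkstar xk xk1 + breg f g xk1 y ≤ Φ y + breg f xkstar xk y :=
  bregman_minimization_lemma_general f Φ X hXconv hf hΦ xk xkstar xk1 hmem hmin
end
end

section
/- Consider the randomized sparse Kaczmarz with averaging iteration: x₀ = x₀* = 0, and for each k, sample a tuple τ_k of η indices i.i.d. with probabilities p_i, set x_{k+1}* = x_k* − (1/η) Σ_{i∈τ_k} w_i (⟨a_i, x_k⟩ − b_i)/‖a_i‖₂² · a_i and x_{k+1} = S_λ(x_{k+1}*). Assume A x̂ = b with ∂f(x̂) ∩ Range(A^T) ≠ ∅ for f(x) = λ‖x‖₁ + ½‖x‖₂², λ > 0, and assume the coupling P W D^{-2} = (α/‖A‖_F²) I with α > 0. Then, with T = (1/(2η)) W + (α/2)(1 − 1/η) A A^T/‖A‖_F², the iterates satisfy E_k[ D_f^{x_{k+1}*}(x_{k+1}, x̂) ] ≤ D_f^{x_k*}(x_k, x̂) − (α/‖A‖_F²)(1 − σ_max(T)) ‖A x_k − b‖₂², where E_k denotes conditional expectation over τ_k. -/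
open Matrix Finset

noncomputable section

/-- One step of the randomized sparse Kaczmarz method with averaging (RSKA) on the dual
variable: `x* ← x* − (1/η) Σ_{i∈τ} w_i (⟨a_i, S_λ(x*)⟩ − b_i)/‖a_i‖₂² · a_i`. -/
def rskaStep {m n : ℕ} (A : Matrix (Fin m) (Fin n) ℝ) (b : Fin m → ℝ) (lam : ℝ)
    (w : Fin m → ℝ) (η : ℕ) (xstar : Fin n → ℝ) (τ : Fin η → Fin m) : Fin n → ℝ :=
  xstar - (η : ℝ)⁻¹ •
    ∑ t, ((w (τ t) * (dot (A (τ t)) (softShrink lam xstar) - b (τ t))) / rowNormSq A (τ t))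
      • A (τ t)

/-! The conjugate `f*(v) = ½‖S_λ v‖²` is `1`-smooth, since `|S_λ v|` is the distance from `v`
to `[-λ, λ]`; with Fenchel–Young, `D_f^{v}(S_λ v, x̂) = f(x̂) + f*(v) − ⟨v, x̂⟩`, so a dual step
`u ↦ u + d` raises the Bregman distance by at most `⟨d, S_λ u − x̂⟩ + ½‖d‖²`. Averaged over the
i.i.d. tuple, the coupling `p_i w_i / ‖a_i‖² = α / ‖A‖_F²` turns the linear term into
`−(α/‖A‖_F²)‖r‖²` with `r = A x_k − b`, and the quadratic term (`η` diagonal and `η(η − 1)` cross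
terms) into `(α/‖A‖_F²) rᵀ T r ≤ (α/‖A‖_F²) σ_max(T) ‖r‖²`. -/

def shrink (lam t : ℝ) : ℝ := Real.sign t * max (|t| - lam) 0

section Shrink

variable {lam : ℝ}

lemma shrink_cases (hlam : 0 ≤ lam) (t : ℝ) :
    (lam ≤ t ∧ shrink lam t = t - lam) ∨ (t ≤ -lam ∧ shrink lam t = t + lam) ∨
      (|t| ≤ lam ∧ shrink lam t = 0) := by
  rcases lt_trichotomy t 0 with ht | rfl | ht
  · rcases le_or_gt t (-lam) with h | h
    · right; left
      refine ⟨h, ?_⟩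
      rw [shrink, Real.sign_of_neg ht, abs_of_neg ht, max_eq_left (by linarith)]; ring
    · right; right
      refine ⟨by rw [abs_of_neg ht]; linarith, ?_⟩
      rw [shrink, abs_of_neg ht, max_eq_right (by linarith), mul_zero]
  · right; right; simp [shrink, hlam]
  · rcases le_or_gt lam t with h | h
    · left
      refine ⟨h, ?_⟩
      rw [shrink, Real.sign_of_pos ht, abs_of_pos ht, max_eq_left (by linarith)]; ring
    · right; right
      refine ⟨by rw [abs_of_pos ht]; linarith, ?_⟩
      rw [shrink, abs_of_pos ht, max_eq_right (by linarith), mul_zero]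

lemma mul_shrink (hlam : 0 ≤ lam) (t : ℝ) :
    t * shrink lam t = lam * |shrink lam t| + shrink lam t ^ 2 := by
  rcases shrink_cases hlam t with ⟨h, hs⟩ | ⟨h, hs⟩ | ⟨-, hs⟩ <;> rw [hs]
  · rw [abs_of_nonneg (by linarith)]; ring
  · rw [abs_of_nonpos (by linarith)]; ring
  · simp

lemma abs_sub_shrink_le (hlam : 0 ≤ lam) (t : ℝ) : |t - shrink lam t| ≤ lam := by
  rcases shrink_cases hlam t with ⟨-, hs⟩ | ⟨-, hs⟩ | ⟨h, hs⟩ <;> rw [hs]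
  · simp [abs_of_nonneg hlam]
  · simp [abs_of_nonneg hlam]
  · simpa using h

lemma abs_shrink_le_abs_sub (hlam : 0 ≤ lam) {c : ℝ} (hc : |c| ≤ lam) (v : ℝ) :
    |shrink lam v| ≤ |v - c| := by
  obtain ⟨hc₁, hc₂⟩ := abs_le.mp hc
  rcases shrink_cases hlam v with ⟨h, hs⟩ | ⟨h, hs⟩ | ⟨-, hs⟩ <;> rw [hs]
  · rw [abs_of_nonneg (by linarith)]; exact le_trans (by linarith) (le_abs_self _)
  · rw [abs_of_nonpos (by linarith)]; exact le_trans (by linarith) (neg_le_abs (v - c))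
  · simp

lemma sq_shrink_le (hlam : 0 ≤ lam) (u v : ℝ) :
    shrink lam v ^ 2 ≤ (shrink lam u + (v - u)) ^ 2 := by
  have h := abs_shrink_le_abs_sub hlam (abs_sub_shrink_le hlam u) v
  rw [show v - (u - shrink lam u) = shrink lam u + (v - u) by ring] at h
  exact sq_le_sq.mpr h

end Shrink

lemma norm2Sq_eq_dotProduct {n : ℕ} (x : Fin n → ℝ) : norm2Sq x = x ⬝ᵥ x := by
  simp only [norm2Sq, dotProduct, sq]

section SoftShrink

variable {n : ℕ} {lam : ℝ}

lemma dot_softShrink_self (hlam : 0 ≤ lam) (v : Fin n → ℝ) :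
    dot v (softShrink lam v) = lam * l1Norm (softShrink lam v) + norm2Sq (softShrink lam v) := by
  simp only [dot, l1Norm, norm2Sq, mul_sum, ← sum_add_distrib]
  exact sum_congr rfl fun j _ => mul_shrink hlam (v j)

/-- Fenchel–Young equality, with `f*(v) = ½‖S_λ v‖²` and `∇f*(v) = S_λ v`. -/
lemma breg_softShrink (hlam : 0 ≤ lam) (v y : Fin n → ℝ) :
    breg (fObj lam) v (softShrink lam v) y
      = fObj lam y + norm2Sq (softShrink lam v) / 2 - dot v y := by
  have h := dot_softShrink_self hlam v
  rw [dot_eq_dotProduct] at h ⊢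
  rw [breg, fObj, fObj, dot_eq_dotProduct, dotProduct_sub, h]
  ring

lemma norm2Sq_softShrink_le (hlam : 0 ≤ lam) (u v : Fin n → ℝ) :
    norm2Sq (softShrink lam v) ≤ norm2Sq (softShrink lam u + (v - u)) :=
  sum_le_sum fun j _ => sq_shrink_le hlam (u j) (v j)

lemma breg_softShrink_le (hlam : 0 ≤ lam) (u v y : Fin n → ℝ) :
    breg (fObj lam) v (softShrink lam v) y
      ≤ breg (fObj lam) u (softShrink lam u) y
        + dot (v - u) (softShrink lam u - y) + norm2Sq (v - u) / 2 := by
  have h := norm2Sq_softShrink_le hlam u v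
  rw [breg_softShrink hlam, breg_softShrink hlam]
  simp only [norm2Sq_eq_dotProduct, dot_eq_dotProduct, add_dotProduct, dotProduct_add,
    sub_dotProduct, dotProduct_sub, dotProduct_comm (softShrink lam u)] at h ⊢
  linarith

end SoftShrink

/-- The expectation `E_k` over a tuple `τ` of i.i.d. indices of law `p`. -/
def tupleMean {ι κ : Type*} [Fintype ι] [Fintype κ] [DecidableEq κ] (p : ι → ℝ)
    (F : (κ → ι) → ℝ) : ℝ :=
  ∑ τ, (∏ t, p (τ t)) * F τ

lemma prod_ite_eq_ite_eq {κ M : Type*} [Fintype κ] [DecidableEq κ] [CommMonoid M] {s t : κ}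
    (hst : s ≠ t) (a b : κ → M) :
    ∏ u, (if u = s then a u else if u = t then b u else 1) = a s * b t := by
  rw [Fintype.prod_eq_mul s t hst fun u hu => by simp [hu.1, hu.2]]
  simp [hst.symm]

namespace tupleMean

variable {ι κ : Type*} [Fintype ι] [Fintype κ] [DecidableEq κ] {p : ι → ℝ}

lemma add (F G : (κ → ι) → ℝ) :
    tupleMean p (fun τ => F τ + G τ) = tupleMean p F + tupleMean p G := by
  simp only [tupleMean, mul_add, sum_add_distrib]

lemma const_mul (c : ℝ) (F : (κ → ι) → ℝ) :
    tupleMean p (fun τ => c * F τ) = c * tupleMean p F := by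
  simp only [tupleMean, mul_sum]
  exact sum_congr rfl fun τ _ => by ring

lemma div_const (F : (κ → ι) → ℝ) (c : ℝ) :
    tupleMean p (fun τ => F τ / c) = tupleMean p F / c := by
  simp only [div_eq_inv_mul, const_mul]

lemma sum {σ : Type*} (s : Finset σ) (F : σ → (κ → ι) → ℝ) :
    tupleMean p (fun τ => ∑ a ∈ s, F a τ) = ∑ a ∈ s, tupleMean p (F a) := by
  simp only [tupleMean, mul_sum]
  exact sum_comm

lemma mono (hp0 : ∀ i, 0 ≤ p i) {F G : (κ → ι) → ℝ} (h : ∀ τ, F τ ≤ G τ) :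
    tupleMean p F ≤ tupleMean p G :=
  sum_le_sum fun τ _ => mul_le_mul_of_nonneg_left (h τ) (prod_nonneg fun t _ => hp0 (τ t))

lemma prod (f : κ → ι → ℝ) :
    tupleMean p (fun τ => ∏ t, f t (τ t)) = ∏ t, ∑ i, p i * f t i := by
  simp only [tupleMean, ← prod_mul_distrib]
  exact (Fintype.prod_sum fun t i => p i * f t i).symm

lemma one (hp1 : ∑ i, p i = 1) : tupleMean p (fun _ : κ → ι => 1) = 1 := by
  simpa [hp1] using prod (p := p) (fun (_ : κ) (_ : ι) => (1 : ℝ))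

lemma const (hp1 : ∑ i, p i = 1) (c : ℝ) : tupleMean p (fun _ : κ → ι => c) = c := by
  simpa [one hp1] using const_mul (p := p) (κ := κ) c (fun _ => 1)

lemma apply (hp1 : ∑ i, p i = 1) (g : ι → ℝ) (s : κ) :
    tupleMean p (fun τ => g (τ s)) = ∑ i, p i * g i := by
  simpa [mul_ite, hp1] using prod (p := p) (fun u i => if u = s then g i else 1)

lemma apply_mul_apply (hp1 : ∑ i, p i = 1) (g h : ι → ℝ) {s t : κ} (hst : s ≠ t) :
    tupleMean p (fun τ => g (τ s) * h (τ t)) = (∑ i, p i * g i) * ∑ i, p i * h i := by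
  have H := prod (p := p) (fun u i => if u = s then g i else if u = t then h i else 1)
  simpa [mul_ite, hp1, Finset.sum_ite_irrel, prod_ite_eq_ite_eq hst] using H

lemma sum_apply (hp1 : ∑ i, p i = 1) (g : ι → ℝ) :
    tupleMean p (fun τ : κ → ι => ∑ t, g (τ t)) = Fintype.card κ * ∑ i, p i * g i := by
  simp [sum, apply hp1]

lemma dotProduct_sum_self {ν : Type*} [Fintype ν] (hp1 : ∑ i, p i = 1) (q : ι → ν → ℝ) :
    tupleMean p (fun τ : κ → ι => (∑ t, q (τ t)) ⬝ᵥ ∑ t, q (τ t))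
      = Fintype.card κ * ∑ i, p i * (q i ⬝ᵥ q i)
        + Fintype.card κ * (Fintype.card κ - 1) * ((∑ i, p i • q i) ⬝ᵥ ∑ i, p i • q i) := by
  have hpair : ∀ s t : κ, tupleMean p (fun τ => q (τ s) ⬝ᵥ q (τ t))
      = if s = t then ∑ i, p i * (q i ⬝ᵥ q i) else (∑ i, p i • q i) ⬝ᵥ ∑ i, p i • q i := by
    intro s t
    split_ifs with hst
    · subst hst
      exact apply hp1 (fun i => q i ⬝ᵥ q i) s
    · calc tupleMean p (fun τ => ∑ j, q (τ s) j * q (τ t) j)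
          = ∑ j, (∑ i, p i * q i j) * ∑ i, p i * q i j := by
            rw [sum]
            exact sum_congr rfl fun j _ => apply_mul_apply hp1 (q · j) (q · j) hst
        _ = _ := by simp only [dotProduct, Finset.sum_apply, Pi.smul_apply, smul_eq_mul]
  have hcount : ∀ a c : ℝ, ∑ s : κ, ∑ t : κ, (if s = t then a else c)
      = Fintype.card κ * a + Fintype.card κ * (Fintype.card κ - 1) * c := by
    intro a c
    have h : ∀ s t : κ, (if s = t then a else c) = c + if s = t then a - c else 0 := by
      intro s t; split_ifs <;> ring
    simp only [h, sum_add_distrib, Finset.sum_ite_eq, mem_univ, if_true, sum_const,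
      card_univ, nsmul_eq_mul]
    ring
  calc tupleMean p (fun τ : κ → ι => (∑ t, q (τ t)) ⬝ᵥ ∑ t, q (τ t))
      = ∑ s, ∑ t, tupleMean p (fun τ => q (τ s) ⬝ᵥ q (τ t)) := by
        simp only [sum_dotProduct, dotProduct_sum, sum]
        exact sum_comm
    _ = _ := by simp only [hpair, hcount]

end tupleMean

section SigmaMax

variable {m n : ℕ}

lemma norm2Sq_nonneg (x : Fin n → ℝ) : 0 ≤ norm2Sq x :=
  sum_nonneg fun _ _ => sq_nonneg _

lemma frobSq_nonneg (M : Matrix (Fin m) (Fin n) ℝ) : 0 ≤ frobSq M :=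
  sum_nonneg fun _ _ => norm2Sq_nonneg (M _)

lemma norm2Sq_pos {x : Fin n → ℝ} (hx : x ≠ 0) : 0 < norm2Sq x := by
  obtain ⟨j, hj⟩ := Function.ne_iff.mp hx
  exact sum_pos' (fun _ _ => sq_nonneg _) ⟨j, mem_univ j, pow_two_pos_of_ne_zero hj⟩

lemma norm2Sq_mulVec_le (M : Matrix (Fin m) (Fin n) ℝ) (x : Fin n → ℝ) :
    norm2Sq (M *ᵥ x) ≤ frobSq M * norm2Sq x := by
  simp only [norm2Sq, frobSq, sum_mul]
  exact sum_le_sum fun i _ => (sum_mul_sq_le_sq_mul_sq univ (M i) x).trans_eq (sum_mul ..)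

lemma bddAbove_sigmaMax (M : Matrix (Fin m) (Fin n) ℝ) :
    BddAbove {t : ℝ | ∃ x : Fin n → ℝ, x ≠ 0 ∧
      t = Real.sqrt (norm2Sq (M *ᵥ x)) / Real.sqrt (norm2Sq x)} := by
  refine ⟨Real.sqrt (frobSq M), ?_⟩
  rintro t ⟨x, hx, rfl⟩
  rw [div_le_iff₀ (Real.sqrt_pos.mpr (norm2Sq_pos hx)),
    ← Real.sqrt_mul' _ (norm2Sq_nonneg x)]
  exact Real.sqrt_le_sqrt (norm2Sq_mulVec_le M x)

lemma dot_mulVec_le_sigmaMax_mul (M : Matrix (Fin m) (Fin m) ℝ) (r : Fin m → ℝ) :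
    dot r (M *ᵥ r) ≤ sigmaMax M * norm2Sq r := by
  rcases eq_or_ne r 0 with rfl | hr
  · simp [dot, norm2Sq]
  have hpos : 0 < Real.sqrt (norm2Sq r) := Real.sqrt_pos.mpr (norm2Sq_pos hr)
  have hle : Real.sqrt (norm2Sq (M *ᵥ r)) / Real.sqrt (norm2Sq r) ≤ sigmaMax M :=
    le_csSup (bddAbove_sigmaMax M) ⟨r, hr, rfl⟩
  calc dot r (M *ᵥ r) ≤ Real.sqrt (norm2Sq r) * Real.sqrt (norm2Sq (M *ᵥ r)) :=
        Real.sum_mul_le_sqrt_mul_sqrt univ r (M *ᵥ r)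
    _ = Real.sqrt (norm2Sq (M *ᵥ r)) / Real.sqrt (norm2Sq r) * norm2Sq r := by
        field_simp
        rw [Real.sq_sqrt (norm2Sq_nonneg r), mul_comm]
    _ ≤ sigmaMax M * norm2Sq r :=
        mul_le_mul_of_nonneg_right hle (norm2Sq_nonneg r)

end SigmaMax

section RSKA

variable {m n : ℕ} (A : Matrix (Fin m) (Fin n) ℝ) (b w : Fin m → ℝ)

def rowCorrection (x : Fin n → ℝ) (i : Fin m) : Fin n → ℝ :=
  (w i * (A *ᵥ x - b) i / rowNormSq A i) • A i

def rskaMatrix (α : ℝ) (η : ℕ) : Matrix (Fin m) (Fin m) ℝ :=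
  (2 * (η : ℝ))⁻¹ • Matrix.diagonal w + (α / 2 * (1 - (η : ℝ)⁻¹) / frobSq A) • (A * Aᵀ)

lemma rskaStep_sub_self (lam : ℝ) {η : ℕ} (xstar : Fin n → ℝ) (τ : Fin η → Fin m) :
    rskaStep A b lam w η xstar τ - xstar
      = -(η : ℝ)⁻¹ • ∑ t, rowCorrection A b w (softShrink lam xstar) (τ t) := by
  rw [rskaStep, sub_sub_cancel_left, neg_smul]
  rfl

lemma dot_rskaMatrix_mulVec (α : ℝ) (η : ℕ) (r : Fin m → ℝ) :
    dot r (rskaMatrix A w α η *ᵥ r)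
      = (2 * (η : ℝ))⁻¹ * ∑ i, w i * r i ^ 2
        + α / 2 * (1 - (η : ℝ)⁻¹) / frobSq A * norm2Sq (Aᵀ *ᵥ r) := by
  rw [rskaMatrix, dot_eq_dotProduct, norm2Sq_eq_dotProduct, add_mulVec, smul_mulVec,
    smul_mulVec, dotProduct_add, dotProduct_smul, dotProduct_smul, ← mulVec_mulVec,
    dotProduct_mulVec r A, ← mulVec_transpose]
  simp only [dotProduct, mulVec_diagonal, smul_eq_mul, sq]
  congr 2
  exact sum_congr rfl fun i _ => by ring

variable {A b w} {p : Fin m → ℝ} {α : ℝ}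

lemma mul_rowCorrection_coeff (hcoup : ∀ i, p i * w i / rowNormSq A i = α / frobSq A)
    (x : Fin n → ℝ) (i : Fin m) :
    p i * (w i * (A *ᵥ x - b) i / rowNormSq A i) = α / frobSq A * (A *ᵥ x - b) i := by
  rw [← hcoup i]
  ring

lemma sum_smul_rowCorrection (hcoup : ∀ i, p i * w i / rowNormSq A i = α / frobSq A)
    (x : Fin n → ℝ) :
    ∑ i, p i • rowCorrection A b w x i = (α / frobSq A) • (Aᵀ *ᵥ (A *ᵥ x - b)) := by
  simp only [rowCorrection, smul_smul, mul_rowCorrection_coeff hcoup, mulVec_transpose,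
    vecMul_eq_sum, Finset.smul_sum, mul_comm (α / frobSq A)]

lemma sum_mul_dotProduct_rowCorrection (hA : ∀ i, A i ≠ 0)
    (hcoup : ∀ i, p i * w i / rowNormSq A i = α / frobSq A) (x : Fin n → ℝ) :
    ∑ i, p i * (rowCorrection A b w x i ⬝ᵥ rowCorrection A b w x i)
      = α / frobSq A * ∑ i, w i * (A *ᵥ x - b) i ^ 2 := by
  rw [mul_sum]
  refine sum_congr rfl fun i _ => ?_
  have hR : rowNormSq A i ≠ 0 := (norm2Sq_pos (hA i)).ne'
  rw [rowCorrection, smul_dotProduct, dotProduct_smul, ← norm2Sq_eq_dotProduct, ← hcoup i]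
  change p i * (_ • _ • rowNormSq A i) = _
  simp only [smul_eq_mul]
  field_simp

lemma rowCorrection_dotProduct_sub {xhat : Fin n → ℝ} (hxhat : A *ᵥ xhat = b)
    (x : Fin n → ℝ) (i : Fin m) :
    rowCorrection A b w x i ⬝ᵥ (x - xhat)
      = w i * (A *ᵥ x - b) i / rowNormSq A i * (A *ᵥ x - b) i := by
  rw [rowCorrection, smul_dotProduct, ← hxhat, ← mulVec_sub, smul_eq_mul]
  rfl

variable {lam : ℝ} {η : ℕ}

lemma tupleMean_dot_rskaStep (hη : 0 < η) (hp1 : ∑ i, p i = 1)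
    (hcoup : ∀ i, p i * w i / rowNormSq A i = α / frobSq A)
    {xhat : Fin n → ℝ} (hxhat : A *ᵥ xhat = b) (xstar : Fin n → ℝ) :
    tupleMean p (fun τ : Fin η → Fin m =>
        dot (rskaStep A b lam w η xstar τ - xstar) (softShrink lam xstar - xhat))
      = -(α / frobSq A) * norm2Sq (A *ᵥ softShrink lam xstar - b) := by
  have hη' : (η : ℝ) ≠ 0 := by positivity
  simp only [rskaStep_sub_self, dot_eq_dotProduct, smul_dotProduct, sum_dotProduct, smul_eq_mul]
  rw [tupleMean.const_mul,
    tupleMean.sum_apply hp1 fun i => rowCorrection A b w _ i ⬝ᵥ (softShrink lam xstar - xhat),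
    Fintype.card_fin]
  simp only [rowCorrection_dotProduct_sub hxhat, ← mul_assoc, mul_rowCorrection_coeff hcoup]
  rw [neg_mul, inv_mul_cancel₀ hη', norm2Sq, mul_sum, mul_sum]
  exact sum_congr rfl fun i _ => by ring

lemma tupleMean_norm2Sq_rskaStep (hη : 0 < η) (hp1 : ∑ i, p i = 1) (hA : ∀ i, A i ≠ 0)
    (hcoup : ∀ i, p i * w i / rowNormSq A i = α / frobSq A) (xstar : Fin n → ℝ) :
    tupleMean p (fun τ : Fin η → Fin m => norm2Sq (rskaStep A b lam w η xstar τ - xstar))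
      = 2 * (α / frobSq A) * dot (A *ᵥ softShrink lam xstar - b)
          (rskaMatrix A w α η *ᵥ (A *ᵥ softShrink lam xstar - b)) := by
  have hη' : (η : ℝ) ≠ 0 := by positivity
  simp only [rskaStep_sub_self, norm2Sq_eq_dotProduct, smul_dotProduct, dotProduct_smul,
    smul_eq_mul, tupleMean.const_mul, tupleMean.dotProduct_sum_self hp1, Fintype.card_fin,
    sum_mul_dotProduct_rowCorrection hA hcoup, sum_smul_rowCorrection hcoup,
    dot_rskaMatrix_mulVec]
  rw [show α / 2 * (1 - (η : ℝ)⁻¹) / frobSq A = α / frobSq A * ((1 - (η : ℝ)⁻¹) / 2) by ring]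
  generalize α / frobSq A = c
  field_simp

end RSKA

theorem rska_one_step_decrease_general {m n η : ℕ} (hη : 0 < η)
    (A : Matrix (Fin m) (Fin n) ℝ) (hA : ∀ i, A i ≠ 0)
    (b : Fin m → ℝ) (lam : ℝ) (hlam : 0 < lam)
    (w p : Fin m → ℝ) (hp0 : ∀ i, 0 ≤ p i) (hp1 : ∑ i, p i = 1)
    (α : ℝ) (hα : 0 < α)
    (hcoup : ∀ i, p i * w i / rowNormSq A i = α / frobSq A)
    (xhat : Fin n → ℝ) (hxhat : A.mulVec xhat = b)
    (xkstar : Fin n → ℝ) :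
    ∑ τ : Fin η → Fin m, (∏ t, p (τ t)) *
        breg (fObj lam) (rskaStep A b lam w η xkstar τ)
          (softShrink lam (rskaStep A b lam w η xkstar τ)) xhat
      ≤ breg (fObj lam) xkstar (softShrink lam xkstar) xhat
        - α / frobSq A *
            (1 - sigmaMax ((2 * (η : ℝ))⁻¹ • Matrix.diagonal w
              + (α / 2 * (1 - (η : ℝ)⁻¹) / frobSq A) • (A * Aᵀ)))
          * norm2Sq (A.mulVec (softShrink lam xkstar) - b) := by
  have hdescent := tupleMean.mono (κ := Fin η) hp0 fun τ =>
    breg_softShrink_le hlam.le xkstar (rskaStep A b lam w η xkstar τ) xhat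
  rw [tupleMean.add, tupleMean.add, tupleMean.const hp1, tupleMean.div_const,
    tupleMean_dot_rskaStep hη hp1 hcoup hxhat, tupleMean_norm2Sq_rskaStep hη hp1 hA hcoup]
    at hdescent
  set r := A *ᵥ softShrink lam xkstar - b
  have hspectral : α / frobSq A * dot r (rskaMatrix A w α η *ᵥ r)
      ≤ α / frobSq A * (sigmaMax (rskaMatrix A w α η) * norm2Sq r) :=
    mul_le_mul_of_nonneg_left (dot_mulVec_le_sigmaMax_mul _ r)
      (div_nonneg hα.le (frobSq_nonneg A))
  change tupleMean p _ ≤ _ - α / frobSq A * (1 - sigmaMax (rskaMatrix A w α η)) * norm2Sq r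
  linarith

/-- (Expected one-step Bregman decrease for RSKA.) Under the coupling
`P W D⁻² = (α/‖A‖_F²) I`, with `T = (1/(2η)) W + (α/2)(1 − 1/η) A Aᵀ/‖A‖_F²`, the conditional
expectation over the tuple `τ_k` satisfies
`E_k[D_f^{x_{k+1}*}(x_{k+1}, x̂)] ≤ D_f^{x_k*}(x_k, x̂) − (α/‖A‖_F²)(1 − σ_max(T))‖A x_k − b‖₂²`. -/
theorem rska_one_step_decrease {m n η : ℕ} (hη : 0 < η)
    (A : Matrix (Fin m) (Fin n) ℝ) (hA : ∀ i, A i ≠ 0)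
    (b : Fin m → ℝ) (lam : ℝ) (hlam : 0 < lam)
    (w p : Fin m → ℝ) (hp0 : ∀ i, 0 ≤ p i) (hp1 : ∑ i, p i = 1)
    (α : ℝ) (hα : 0 < α)
    (hcoup : ∀ i, p i * w i / rowNormSq A i = α / frobSq A)
    (xhat : Fin n → ℝ) (hxhat : A.mulVec xhat = b)
    (hrange : ∃ y : Fin m → ℝ, IsSubgrad (fObj lam) xhat (Aᵀ.mulVec y))
    (xkstar : Fin n → ℝ) :
    ∑ τ : Fin η → Fin m, (∏ t, p (τ t)) *
        breg (fObj lam) (rskaStep A b lam w η xkstar τ)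
          (softShrink lam (rskaStep A b lam w η xkstar τ)) xhat
      ≤ breg (fObj lam) xkstar (softShrink lam xkstar) xhat
        - α / frobSq A *
            (1 - sigmaMax ((2 * (η : ℝ))⁻¹ • Matrix.diagonal w
              + (α / 2 * (1 - (η : ℝ)⁻¹) / frobSq A) • (A * Aᵀ)))
          * norm2Sq (A.mulVec (softShrink lam xkstar) - b) :=
  rska_one_step_decrease_general hη A hA b lam hlam w p hp0 hp1 α hα hcoup xhat hxhat xkstar
end
end
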